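/- If R1 ⊕ R2 ≠ ⊥, then Mid(R1 ⊕ R2) = (Out(R1) ∩ In(R2)) ∪ Mid(R1) ∪ Mid(R2), and Out(R1 ⊕ R2) = (Out(R1) ∪ Out(R2)) ∖ (Out(R1) ∩ In(R2)). -/
import Mathlib


/-- A recipe graph: comestible nodes `C`, action nodes `A`, arcs `E`. -/
structure RecipeGraph (V : Type) [DecidableEq V] where
  C : Finset V
  A : Finset V
  E : Finset (V × V)
  hC : C.Nonempty
  hA : A.Nonempty
  hdisj : Disjoint C A
  hE : ∀ e ∈ E, (e.1 ∈ C ∧ e.2 ∈ A) ∨ (e.1 ∈ A ∧ e.2 ∈ C)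
  hconn : ∀ x ∈ C ∪ A, ∀ y ∈ C ∪ A,
    Relation.ReflTransGen (fun u v => (u, v) ∈ E ∨ (v, u) ∈ E) x y
  hacyc : ∀ x : V, ¬ Relation.TransGen (fun u v => (u, v) ∈ E) x x
  hactIn : ∀ a ∈ A, ∃ c, (c, a) ∈ E
  hactOut : ∀ a ∈ A, ∃ c, (a, c) ∈ E
  hcomIn : ∀ c ∈ C, ∀ a a' : V, (a, c) ∈ E → (a', c) ∈ E → a = a'

variable {V : Type} [DecidableEq V]

/-- In-degree of a node. -/
def RecipeGraph.inDeg (G : RecipeGraph V) (n : V) : ℕ :=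
  (G.E.filter (fun e => e.2 = n)).card

/-- Out-degree of a node. -/
def RecipeGraph.outDeg (G : RecipeGraph V) (n : V) : ℕ :=
  (G.E.filter (fun e => e.1 = n)).card

/-- A recipe: a recipe graph with a typing function into a type hierarchy
(`≤` is the subtype relation), such that comparable comestible types imply identical nodes. -/
structure Recipe (V T : Type) [DecidableEq V] [Preorder T] where
  G : RecipeGraph V
  F : V → T
  hF : ∀ n ∈ G.C, ∀ n' ∈ G.C, (F n ≤ F n' ∨ F n' ≤ F n) → n = n'

variable {T : Type} [Preorder T]

def Recipe.Nodes (R : Recipe V T) : Set V := ↑(R.G.C ∪ R.G.A)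

/-- In-nodes: comestibles with no incoming arc. -/
def Recipe.InS (R : Recipe V T) : Set V := {c | c ∈ R.G.C ∧ ∀ n, (n, c) ∉ R.G.E}

/-- Out-nodes: comestibles with no outgoing arc. -/
def Recipe.OutS (R : Recipe V T) : Set V := {c | c ∈ R.G.C ∧ ∀ n, (c, n) ∉ R.G.E}

/-- Mid-nodes: comestibles with both an incoming and an outgoing arc. -/
def Recipe.MidS (R : Recipe V T) : Set V :=
  {c | c ∈ R.G.C ∧ (∃ n, (n, c) ∈ R.G.E) ∧ (∃ n, (c, n) ∈ R.G.E)}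

/-- Extensional equality of recipes: same graph, typing functions agree on the nodes. -/
def Recipe.REq (R R' : Recipe V T) : Prop :=
  R.G = R'.G ∧ ∀ n ∈ R.Nodes, R.F n = R'.F n

/-- Conditions (1)-(6) under which the composition `R1 ⊕ R2` is defined (≠ ⊥). -/
def Composable (R1 R2 : Recipe V T) : Prop :=
  (R1.OutS ∩ R2.InS).Nonempty ∧
  R1.MidS ∩ R2.MidS = ∅ ∧
  Disjoint R1.G.A R2.G.A ∧
  R2.OutS ∩ R1.InS = ∅ ∧
  (∀ n ∈ R1.OutS ∩ R2.InS, R1.F n = R2.F n) ∧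
  (∀ n ∈ (↑R1.G.C : Set V) \ R1.OutS, ∀ n' ∈ (↑R2.G.C : Set V) \ R2.InS,
    ¬(R1.F n ≤ R2.F n' ∨ R2.F n' ≤ R1.F n))

/-- `R` is the composition `R1 ⊕ R2`: the conditions hold and `R` is the
componentwise union, with typing function `F1 ∪ F2`. -/
def IsComp (R1 R2 R : Recipe V T) : Prop :=
  Composable R1 R2 ∧
  R.G.C = R1.G.C ∪ R2.G.C ∧
  R.G.A = R1.G.A ∪ R2.G.A ∧
  R.G.E = R1.G.E ∪ R2.G.E ∧
  (∀ n ∈ R1.Nodes, R.F n = R1.F n) ∧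
  (∀ n ∉ R1.Nodes, R.F n = R2.F n)

/-- Every comestible node of a recipe graph is incident to at least one arc. -/
lemma RecipeGraph.nonisolated (G : RecipeGraph V) {c : V} (hc : c ∈ G.C) :
    (∃ n, (n, c) ∈ G.E) ∨ (∃ n, (c, n) ∈ G.E) := by
  obtain ⟨a, ha⟩ := G.hA
  have hca : c ≠ a := by
    rintro rfl
    exact (Finset.disjoint_left.mp G.hdisj hc) ha
  rcases Relation.ReflTransGen.cases_head
      (G.hconn c (Finset.mem_union_left _ hc) a (Finset.mem_union_right _ ha)) with
    h | ⟨b, hb, _⟩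
  · exact absurd h hca
  · rcases hb with h | h
    · exact Or.inr ⟨b, h⟩
    · exact Or.inl ⟨b, h⟩

/-- If `R1 ⊕ R2 ≠ ⊥`, then
`Mid(R1 ⊕ R2) = (Out(R1) ∩ In(R2)) ∪ Mid(R1) ∪ Mid(R2)` and
`Out(R1 ⊕ R2) = (Out(R1) ∪ Out(R2)) ∖ (Out(R1) ∩ In(R2))`. -/
theorem comp_mid_out (R1 R2 R : Recipe V T) (h : IsComp R1 R2 R) :
    R.MidS = (R1.OutS ∩ R2.InS) ∪ R1.MidS ∪ R2.MidS ∧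
    R.OutS = (R1.OutS ∪ R2.OutS) \ (R1.OutS ∩ R2.InS) := by
  obtain ⟨⟨hne, hmid12, hA12, hoi, hty, hinc⟩, hC, hA, hE, hF1, hF2⟩ := h
  have hE' : ∀ p : V × V, p ∈ R.G.E ↔ p ∈ R1.G.E ∨ p ∈ R2.G.E := by
    intro p; rw [hE]; exact Finset.mem_union
  have hCd := R.G.hdisj
  -- endpoint transfer lemmas
  have hin1 : ∀ {x y : V}, (x, y) ∈ R1.G.E → y ∈ R.G.C → y ∈ R1.G.C ∧ x ∈ R1.G.A := by
    intro x y hxy hy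
    rcases R1.G.hE _ hxy with ⟨hx, hy'⟩ | ⟨hx, hy'⟩
    · exact absurd (by rw [hA]; exact Finset.mem_union_left _ hy')
        (Finset.disjoint_left.mp hCd hy)
    · exact ⟨hy', hx⟩
  have hin2 : ∀ {x y : V}, (x, y) ∈ R2.G.E → y ∈ R.G.C → y ∈ R2.G.C ∧ x ∈ R2.G.A := by
    intro x y hxy hy
    rcases R2.G.hE _ hxy with ⟨hx, hy'⟩ | ⟨hx, hy'⟩
    · exact absurd (by rw [hA]; exact Finset.mem_union_right _ hy')
        (Finset.disjoint_left.mp hCd hy)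
    · exact ⟨hy', hx⟩
  have hout1 : ∀ {x y : V}, (x, y) ∈ R1.G.E → x ∈ R.G.C → x ∈ R1.G.C ∧ y ∈ R1.G.A := by
    intro x y hxy hx
    rcases R1.G.hE _ hxy with ⟨hx', hy'⟩ | ⟨hx', hy'⟩
    · exact ⟨hx', hy'⟩
    · exact absurd (by rw [hA]; exact Finset.mem_union_left _ hx')
        (Finset.disjoint_left.mp hCd hx)
  have hout2 : ∀ {x y : V}, (x, y) ∈ R2.G.E → x ∈ R.G.C → x ∈ R2.G.C ∧ y ∈ R2.G.A := by
    intro x y hxy hx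
    rcases R2.G.hE _ hxy with ⟨hx', hy'⟩ | ⟨hx', hy'⟩
    · exact ⟨hx', hy'⟩
    · exact absurd (by rw [hA]; exact Finset.mem_union_right _ hx')
        (Finset.disjoint_left.mp hCd hx)
  -- a comestible cannot have incoming arcs from both recipes
  have L : ∀ {c a a' : V}, c ∈ R.G.C → (a, c) ∈ R1.G.E → (a', c) ∈ R2.G.E → False := by
    intro c a a' hc h1 h2
    have heq : a = a' :=
      R.G.hcomIn c hc a a' ((hE' _).2 (Or.inl h1)) ((hE' _).2 (Or.inr h2))
    have ha1 : a ∈ R1.G.A := (hin1 h1 hc).2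
    have ha2 : a' ∈ R2.G.A := (hin2 h2 hc).2
    exact Finset.disjoint_left.mp hA12 ha1 (heq ▸ ha2)
  constructor
  · ext c
    constructor
    · rintro ⟨hcR, ⟨n, hn⟩, ⟨m, hm⟩⟩
      rcases (hE' _).1 hn with hn1 | hn2 <;> rcases (hE' _).1 hm with hm1 | hm2
      · exact Or.inl (Or.inr ⟨(hin1 hn1 hcR).1, ⟨n, hn1⟩, ⟨m, hm1⟩⟩)
      · -- in-arc in E1, out-arc in E2
        have hc1 : c ∈ R1.G.C := (hin1 hn1 hcR).1
        have hc2 : c ∈ R2.G.C := (hout2 hm2 hcR).1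
        by_cases ho1 : ∃ k, (c, k) ∈ R1.G.E
        · obtain ⟨k, hk⟩ := ho1
          exact Or.inl (Or.inr ⟨hc1, ⟨n, hn1⟩, ⟨k, hk⟩⟩)
        · by_cases hi2 : ∃ k, (k, c) ∈ R2.G.E
          · obtain ⟨k, hk⟩ := hi2
            exact Or.inr ⟨hc2, ⟨k, hk⟩, ⟨m, hm2⟩⟩
          · exact Or.inl (Or.inl ⟨⟨hc1, fun k hk => ho1 ⟨k, hk⟩⟩,
              ⟨hc2, fun k hk => hi2 ⟨k, hk⟩⟩⟩)
      · -- in-arc in E2, out-arc in E1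
        have hc1 : c ∈ R1.G.C := (hout1 hm1 hcR).1
        have hc2 : c ∈ R2.G.C := (hin2 hn2 hcR).1
        by_cases hi1 : ∃ k, (k, c) ∈ R1.G.E
        · obtain ⟨k, hk⟩ := hi1
          exact absurd (L hcR hk hn2) (fun h => h)
        · by_cases ho2 : ∃ k, (c, k) ∈ R2.G.E
          · obtain ⟨k, hk⟩ := ho2
            exact Or.inr ⟨hc2, ⟨n, hn2⟩, ⟨k, hk⟩⟩
          · have hmem : c ∈ R2.OutS ∩ R1.InS :=
              ⟨⟨hc2, fun k hk => ho2 ⟨k, hk⟩⟩, ⟨hc1, fun k hk => hi1 ⟨k, hk⟩⟩⟩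
            rw [hoi] at hmem
            exact hmem.elim
      · exact Or.inr ⟨(hin2 hn2 hcR).1, ⟨n, hn2⟩, ⟨m, hm2⟩⟩
    · rintro ((⟨⟨hc1, ho1⟩, hc2, hi2⟩ | ⟨hc1, ⟨n, hn⟩, ⟨m, hm⟩⟩) | ⟨hc2, ⟨n, hn⟩, ⟨m, hm⟩⟩)
      · refine ⟨by rw [hC]; exact Finset.mem_union_left _ hc1, ?_, ?_⟩
        · rcases R1.G.nonisolated hc1 with ⟨n, hn⟩ | ⟨n, hn⟩
          · exact ⟨n, (hE' _).2 (Or.inl hn)⟩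
          · exact absurd hn (ho1 n)
        · rcases R2.G.nonisolated hc2 with ⟨n, hn⟩ | ⟨n, hn⟩
          · exact absurd hn (hi2 n)
          · exact ⟨n, (hE' _).2 (Or.inr hn)⟩
      · exact ⟨by rw [hC]; exact Finset.mem_union_left _ hc1,
          ⟨n, (hE' _).2 (Or.inl hn)⟩, ⟨m, (hE' _).2 (Or.inl hm)⟩⟩
      · exact ⟨by rw [hC]; exact Finset.mem_union_right _ hc2,
          ⟨n, (hE' _).2 (Or.inr hn)⟩, ⟨m, (hE' _).2 (Or.inr hm)⟩⟩
  · ext c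
    constructor
    · rintro ⟨hcR, hno⟩
      refine ⟨?_, ?_⟩
      · rcases Finset.mem_union.mp (hC ▸ hcR) with hc1 | hc2
        · exact Or.inl ⟨hc1, fun n hn => hno n ((hE' _).2 (Or.inl hn))⟩
        · exact Or.inr ⟨hc2, fun n hn => hno n ((hE' _).2 (Or.inr hn))⟩
      · rintro ⟨-, hc2, hi2⟩
        rcases R2.G.nonisolated hc2 with ⟨n, hn⟩ | ⟨n, hn⟩
        · exact hi2 n hn
        · exact hno n ((hE' _).2 (Or.inr hn))
    · rintro ⟨(⟨hc1, ho1⟩ | ⟨hc2, ho2⟩), hnot⟩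
      · refine ⟨by rw [hC]; exact Finset.mem_union_left _ hc1, fun n hn => ?_⟩
        have hcR : c ∈ R.G.C := by rw [hC]; exact Finset.mem_union_left _ hc1
        rcases (hE' _).1 hn with hn1 | hn2
        · exact ho1 n hn1
        · -- out-arc in E2, c ∈ Out1
          have hc2 : c ∈ R2.G.C := (hout2 hn2 hcR).1
          by_cases hi2 : ∃ k, (k, c) ∈ R2.G.E
          · obtain ⟨k, hk⟩ := hi2
            rcases R1.G.nonisolated hc1 with ⟨k', hk'⟩ | ⟨k', hk'⟩
            · exact L hcR hk' hk
            · exact ho1 k' hk'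
          · exact hnot ⟨⟨hc1, ho1⟩, ⟨hc2, fun k hk => hi2 ⟨k, hk⟩⟩⟩
      · refine ⟨by rw [hC]; exact Finset.mem_union_right _ hc2, fun n hn => ?_⟩
        have hcR : c ∈ R.G.C := by rw [hC]; exact Finset.mem_union_right _ hc2
        rcases (hE' _).1 hn with hn1 | hn2
        · -- out-arc in E1, c ∈ Out2
          have hc1 : c ∈ R1.G.C := (hout1 hn1 hcR).1
          by_cases hi1 : ∃ k, (k, c) ∈ R1.G.E
          · obtain ⟨k, hk⟩ := hi1
            rcases R2.G.nonisolated hc2 with ⟨k', hk'⟩ | ⟨k', hk'⟩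
            · exact L hcR hk hk'
            · exact ho2 k' hk'
          · have : c ∈ R2.OutS ∩ R1.InS :=
              ⟨⟨hc2, ho2⟩, ⟨hc1, fun k hk => hi1 ⟨k, hk⟩⟩⟩
            rw [hoi] at this
            exact this.elim
        · exact ho2 n hn2
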